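/- Correctness of the constraint-postponement unification algorithm: if the algorithm, starting from configuration (C; ∅) and repeatedly applying rules (Solve) and (Fail), reaches (∅; θ), then θ is a most general unifier of the problem C; and if it reaches ⊥, then C has no unifier. -/

import Mathlib

/-- Universe level expressions: `l ::= i | 0 | S l | l ⊔ l'`. -/
inductive Lvl : Type
  | var : ℕ → Lvl
  | zero : Lvl
  | succ : Lvl → Lvl
  | max : Lvl → Lvl → Lvl
  deriving DecidableEq

namespace Lvl

/-- Interpretation of a level under an assignment `φ` of naturals to variables. -/
def eval (φ : ℕ → ℕ) : Lvl → ℕ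
  | .var i => φ i
  | .zero => 0
  | .succ l => l.eval φ + 1
  | .max a b => Nat.max (a.eval φ) (b.eval φ)

/-- Semantic equivalence: equal value under every assignment. -/
def Equiv (l l' : Lvl) : Prop := ∀ φ : ℕ → ℕ, l.eval φ = l'.eval φ

/-- Application of a level substitution. -/
def subst (θ : ℕ → Lvl) : Lvl → Lvl
  | .var i => θ i
  | .zero => .zero
  | .succ l => .succ (l.subst θ)
  | .max a b => .max (a.subst θ) (b.subst θ)

/-- Free variables of a level. -/
def fv : Lvl → Finset ℕ
  | .var i => {i}
  | .zero => ∅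
  | .succ l => l.fv
  | .max a b => a.fv ∪ b.fv

/-- The constant level `n`, i.e. `Sⁿ 0`. -/
def const (n : ℕ) : Lvl := Lvl.succ^[n] Lvl.zero

/-- The level `n + i`, i.e. `Sⁿ i`. -/
def atom (n i : ℕ) : Lvl := Lvl.succ^[n] (Lvl.var i)

end Lvl

/-- `θ` is a unifier of the equation `l₁ ≐ l₂`. -/
def Unifies (θ : ℕ → Lvl) (l₁ l₂ : Lvl) : Prop := Lvl.Equiv (l₁.subst θ) (l₂.subst θ)

/-- `θ` is a most general unifier of the equation `l₁ ≐ l₂`. -/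
def IsMGU (θ : ℕ → Lvl) (l₁ l₂ : Lvl) : Prop :=
  Unifies θ l₁ l₂ ∧ ∀ τ, Unifies τ l₁ l₂ →
    ∃ θ' : ℕ → Lvl, ∀ i ∈ l₁.fv ∪ l₂.fv, Lvl.Equiv ((θ i).subst θ') (τ i)

/-- The level `p ⊔ (n₁ + i₁) ⊔ ... ⊔ (n_m + i_m)` given by canonical-form data. -/
def buildCanon (p : ℕ) (L : List (ℕ × ℕ)) : Lvl :=
  L.foldr (fun a acc => Lvl.max (Lvl.atom a.1 a.2) acc) (Lvl.const p)

/-- The equation `buildCanon p₁ L₁ ≐ buildCanon p₂ L₂` is in canonical form: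
both sides canonical (coefficients bounded by the constant coefficient, variables
pairwise distinct), shared variables have equal coefficients on both sides, and
some coefficient on some side equals `0`. -/
def CanonEqn (p₁ : ℕ) (L₁ : List (ℕ × ℕ)) (p₂ : ℕ) (L₂ : List (ℕ × ℕ)) : Prop :=
  (∀ a ∈ L₁, a.1 ≤ p₁) ∧ (L₁.map Prod.snd).Nodup ∧
  (∀ a ∈ L₂, a.1 ≤ p₂) ∧ (L₂.map Prod.snd).Nodup ∧
  (∀ a ∈ L₁, ∀ b ∈ L₂, a.2 = b.2 → a.1 = b.1) ∧
  0 ∈ (p₁ :: p₂ :: (L₁ ++ L₂).map Prod.fst)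

/-- Level equations. -/
abbrev Eqn := Lvl × Lvl

/-- Applying a level substitution to both sides of an equation. -/
def substEqn (σ : ℕ → Lvl) (e : Eqn) : Eqn := (e.1.subst σ, e.2.subst σ)

/-- `τ` is a unifier (solution) of the unification problem `C`. -/
def SolvesP (τ : ℕ → Lvl) (C : Finset Eqn) : Prop := ∀ e ∈ C, Unifies τ e.1 e.2

/-- `θ` is a most general unifier of the problem `C`: it solves `C` and every
solution factors through it, up to `≃`, on the variables of `C`. -/
def IsMGUP (θ : ℕ → Lvl) (C : Finset Eqn) : Prop :=
  SolvesP θ C ∧ ∀ τ, SolvesP τ C →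
    ∃ θ' : ℕ → Lvl, ∀ j : ℕ, (∃ e ∈ C, j ∈ e.1.fv ∪ e.2.fv) →
      Lvl.Equiv ((θ j).subst θ') (τ j)

/-- Unification configurations: either failure `⊥` or a pair of a finite set of
equations and a substitution. -/
inductive Config : Type
  | bot : Config
  | ok : Finset Eqn → (ℕ → Lvl) → Config

/-- The transition system on configurations.  Rule (Solve) removes an equation
`e` admitting an mgu `σ` whose domain is exactly the free variables of `e`
(`σ` is the identity outside of them) and whose range variables are fresh (they
occur neither in the equations of the configuration, nor in the domain or range
of the current substitution `θ`); it applies `σ` to the remaining constraints and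
produces the substitution `σ ∪ θ[σ]` (which, as `θ` is the identity on the
domain of `σ`, is `fun i => (θ i)[σ]`).  Rule (Fail) moves to `⊥` when some
equation is not unifiable. -/
inductive Step : Config → Config → Prop
  | solve (e : Eqn) (C : Finset Eqn) (θ σ : ℕ → Lvl)
      (he : e ∉ C) (hσ : IsMGU σ e.1 e.2)
      (hdom : ∀ i : ℕ, i ∉ e.1.fv ∪ e.2.fv → σ i = Lvl.var i)
      (hfresh : ∀ i ∈ e.1.fv ∪ e.2.fv, ∀ j ∈ (σ i).fv,
        (∀ e' ∈ insert e C, j ∉ e'.1.fv ∪ e'.2.fv) ∧ θ j = Lvl.var j ∧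
        ∀ k : ℕ, θ k ≠ Lvl.var k → j ∉ (θ k).fv) :
      Step (.ok (insert e C) θ)
        (.ok (C.image (substEqn σ)) (fun i => (θ i).subst σ))
  | fail (e : Eqn) (C : Finset Eqn) (θ : ℕ → Lvl)
      (he : e ∈ C) (h : ¬ ∃ τ, Unifies τ e.1 e.2) :
      Step (.ok C θ) .bot

/-!
Along every run from `(C₀; id)` the reached configuration `(C; θ)` satisfies an invariant: each
solution `τ` of `C` yields the solution `θ[τ]` of `C₀`, and each solution of `C₀` agrees, up to `≃`
on the variables of `C₀`, with `θ[τ]` for some solution `τ` of `C`. (Solve) preserves it because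
`σ` is an mgu of the removed equation and its range variables are fresh: a solution of the old
problem is turned into one of the new problem by redefining it on the range variables only,
through the factor it has through `σ`. (Fail) meets an equation that every solution of `C₀`
would have to solve. At `(∅; θ)` the invariant says exactly that `θ` is an mgu of `C₀`.
-/

namespace Lvl

theorem eval_subst (σ : ℕ → Lvl) (l : Lvl) (φ : ℕ → ℕ) :
    (l.subst σ).eval φ = l.eval fun i => (σ i).eval φ := by
  induction l <;> simp [subst, eval, *]

theorem eval_congr {φ φ' : ℕ → ℕ} (l : Lvl) (h : ∀ i ∈ l.fv, φ i = φ' i) :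
    l.eval φ = l.eval φ' := by
  induction l with
  | var i => exact h i (Finset.mem_singleton_self i)
  | zero => rfl
  | succ l ih => simp only [eval, ih h]
  | max a b iha ihb =>
    simp only [fv, Finset.mem_union] at h
    simp only [eval, iha fun i hi => h i (.inl hi), ihb fun i hi => h i (.inr hi)]

theorem subst_subst (σ τ : ℕ → Lvl) (l : Lvl) :
    (l.subst σ).subst τ = l.subst fun i => (σ i).subst τ := by
  induction l <;> simp [subst, *]

theorem subst_var (l : Lvl) : l.subst var = l := by
  induction l <;> simp [subst, *]

theorem subst_eq_var {σ : ℕ → Lvl} {l : Lvl} {j : ℕ} (h : l.subst σ = var j) :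
    ∃ m, l = var m ∧ σ m = var j := by
  cases l <;> simp_all [subst]

theorem fv_subset_fv_subst {σ : ℕ → Lvl} {l : Lvl} {i : ℕ} (hi : i ∈ l.fv) :
    (σ i).fv ⊆ (l.subst σ).fv := by
  induction l with
  | var m => rw [fv, Finset.mem_singleton] at hi; subst hi; exact subset_rfl
  | zero => simp [fv] at hi
  | succ l ih => exact ih hi
  | max a b iha ihb =>
    rw [fv, Finset.mem_union] at hi
    rcases hi with hi | hi
    · exact (iha hi).trans Finset.subset_union_left
    · exact (ihb hi).trans Finset.subset_union_right

namespace Equiv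

theorem refl (l : Lvl) : Equiv l l := fun _ => rfl

theorem trans {l₁ l₂ l₃ : Lvl} (h₁₂ : Equiv l₁ l₂) (h₂₃ : Equiv l₂ l₃) : Equiv l₁ l₃ :=
  fun φ => (h₁₂ φ).trans (h₂₃ φ)

theorem subst {l l' : Lvl} (h : Equiv l l') (ρ : ℕ → Lvl) : Equiv (l.subst ρ) (l'.subst ρ) :=
  fun φ => by rw [eval_subst, eval_subst, h]

end Equiv

theorem subst_equiv_subst {ρ ρ' : ℕ → Lvl} (l : Lvl) (h : ∀ i ∈ l.fv, Equiv (ρ i) (ρ' i)) :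
    Equiv (l.subst ρ) (l.subst ρ') :=
  fun φ => by rw [eval_subst, eval_subst]; exact eval_congr l fun i hi => h i hi φ

end Lvl

theorem unifies_comp_iff {σ τ : ℕ → Lvl} {l₁ l₂ : Lvl} :
    Unifies (fun i => (σ i).subst τ) l₁ l₂ ↔ Unifies τ (l₁.subst σ) (l₂.subst σ) := by
  simp only [Unifies, Lvl.subst_subst]

theorem Unifies.of_equiv {ρ ρ' : ℕ → Lvl} {l₁ l₂ : Lvl} (h : Unifies ρ' l₁ l₂)
    (hρ : ∀ i ∈ l₁.fv ∪ l₂.fv, Lvl.Equiv (ρ i) (ρ' i)) : Unifies ρ l₁ l₂ := fun φ => by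
  rw [Lvl.subst_equiv_subst l₁ (fun i hi => hρ i (Finset.mem_union_left _ hi)) φ,
    Lvl.subst_equiv_subst l₂ (fun i hi => hρ i (Finset.mem_union_right _ hi)) φ]
  exact h φ

theorem solvesP_comp_iff {σ τ : ℕ → Lvl} {C : Finset Eqn} :
    SolvesP (fun i => (σ i).subst τ) C ↔ SolvesP τ (C.image (substEqn σ)) := by
  simp only [SolvesP, Finset.forall_mem_image, unifies_comp_iff, substEqn]

def Occurs (j : ℕ) (C : Finset Eqn) : Prop := ∃ e ∈ C, j ∈ e.1.fv ∪ e.2.fv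

theorem Occurs.image_subst {σ : ℕ → Lvl} {j : ℕ} {C : Finset Eqn} (h : Occurs j C)
    (hσ : σ j = .var j) : Occurs j (C.image (substEqn σ)) := by
  obtain ⟨e, he, hj⟩ := h
  have hsub : ∀ l : Lvl, j ∈ l.fv → j ∈ (l.subst σ).fv := fun l hl =>
    Lvl.fv_subset_fv_subst hl (by rw [hσ]; exact Finset.mem_singleton_self j)
  refine ⟨substEqn σ e, Finset.mem_image_of_mem _ he, ?_⟩
  rcases Finset.mem_union.mp hj with hj | hj
  · exact Finset.mem_union_left _ (hsub _ hj)
  · exact Finset.mem_union_right _ (hsub _ hj)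

def RangeVar (σ : ℕ → Lvl) (e : Eqn) (j : ℕ) : Prop := ∃ i ∈ e.1.fv ∪ e.2.fv, j ∈ (σ i).fv

theorem IsMGU.exists_subst_equiv {σ τ : ℕ → Lvl} {e : Eqn} (hσ : IsMGU σ e.1 e.2)
    (hdom : ∀ i, i ∉ e.1.fv ∪ e.2.fv → σ i = .var i) (hτ : Unifies τ e.1 e.2) :
    ∃ τ' : ℕ → Lvl, ∀ i, ¬ RangeVar σ e i → Lvl.Equiv ((σ i).subst τ') (τ i) := by
  classical
  obtain ⟨θ, hθ⟩ := hσ.2 τ hτ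
  refine ⟨fun j => if RangeVar σ e j then θ j else τ j, fun i hi => ?_⟩
  by_cases hie : i ∈ e.1.fv ∪ e.2.fv
  · refine (Lvl.subst_equiv_subst _ fun j hj => ?_).trans (hθ i hie)
    rw [if_pos ⟨i, hie, hj⟩]
    exact Lvl.Equiv.refl _
  · rw [hdom i hie, Lvl.subst, if_neg hi]
    exact Lvl.Equiv.refl _

/-- The third field is needed because freshness in (Solve) is only checked against the current
configuration: the variables of `C₀` that `θ` leaves unbound must stay visible in `C`. -/
structure Invariant (C₀ C : Finset Eqn) (θ : ℕ → Lvl) : Prop where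
  sound : ∀ τ, SolvesP τ C → SolvesP (fun i => (θ i).subst τ) C₀
  complete : ∀ τ, SolvesP τ C₀ →
    ∃ τ', SolvesP τ' C ∧ ∀ j, Occurs j C₀ → Lvl.Equiv ((θ j).subst τ') (τ j)
  occurs_of_eq_var : ∀ j, Occurs j C₀ → θ j = .var j → Occurs j C

namespace Invariant

variable {C₀ C : Finset Eqn} {θ : ℕ → Lvl}

theorem init (C₀ : Finset Eqn) : Invariant C₀ C₀ Lvl.var where
  sound _ hτ := hτ
  complete τ hτ := ⟨τ, hτ, fun _ _ => Lvl.Equiv.refl _⟩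
  occurs_of_eq_var _ hj _ := hj

theorem isMGUP (inv : Invariant C₀ ∅ θ) : IsMGUP θ C₀ := by
  refine ⟨?_, fun τ hτ => ?_⟩
  · simpa only [Lvl.subst_var] using inv.sound Lvl.var (by simp [SolvesP])
  · obtain ⟨τ', -, hτ'⟩ := inv.complete τ hτ
    exact ⟨τ', hτ'⟩

theorem not_solvesP {e : Eqn} (inv : Invariant C₀ C θ) (he : e ∈ C)
    (hne : ¬ ∃ τ, Unifies τ e.1 e.2) : ¬ ∃ τ, SolvesP τ C₀ := by
  rintro ⟨τ, hτ⟩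
  obtain ⟨τ', hτ', -⟩ := inv.complete τ hτ
  exact hne ⟨τ', hτ' e he⟩

theorem solve {e : Eqn} {σ : ℕ → Lvl} (inv : Invariant C₀ (insert e C) θ)
    (hσ : IsMGU σ e.1 e.2) (hdom : ∀ i, i ∉ e.1.fv ∪ e.2.fv → σ i = .var i)
    (hfresh : ∀ i ∈ e.1.fv ∪ e.2.fv, ∀ j ∈ (σ i).fv,
      (∀ e' ∈ insert e C, j ∉ e'.1.fv ∪ e'.2.fv) ∧ θ j = .var j ∧
      ∀ k, θ k ≠ .var k → j ∉ (θ k).fv) :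
    Invariant C₀ (C.image (substEqn σ)) fun i => (θ i).subst σ := by
  have not_occurs : ∀ j, RangeVar σ e j → ∀ e' ∈ insert e C, j ∉ e'.1.fv ∪ e'.2.fv :=
    fun j ⟨i, hi, hj⟩ => (hfresh i hi j hj).1
  refine ⟨fun τ hτ => ?_, fun τ hτ => ?_, fun j hj hθj => ?_⟩
  · have hστ : SolvesP (fun i => (σ i).subst τ) (insert e C) :=
      (Finset.forall_mem_insert ..).mpr ⟨unifies_comp_iff.mpr (hσ.1.subst τ),
        solvesP_comp_iff.mpr hτ⟩
    simpa only [Lvl.subst_subst] using inv.sound _ hστ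
  · obtain ⟨τ₁, hτ₁, hθτ₁⟩ := inv.complete τ hτ
    obtain ⟨τ₂, hτ₂⟩ := hσ.exists_subst_equiv hdom (hτ₁ e (Finset.mem_insert_self e C))
    refine ⟨τ₂, solvesP_comp_iff.mp fun e' he' => ?_, fun j hj => ?_⟩
    · exact (hτ₁ e' (Finset.mem_insert_of_mem he')).of_equiv fun i hi => hτ₂ i fun hr =>
        not_occurs i hr e' (Finset.mem_insert_of_mem he') hi
    have hθj : ∀ i ∈ (θ j).fv, ¬ RangeVar σ e i := by
      rintro i hi hr
      obtain ⟨i₀, hi₀, hσi₀⟩ := hr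
      by_cases hvar : θ j = .var j
      · rw [hvar, Lvl.fv, Finset.mem_singleton] at hi
        subst hi
        obtain ⟨e', he', hie'⟩ := inv.occurs_of_eq_var i hj hvar
        exact (hfresh i₀ hi₀ i hσi₀).1 e' he' hie'
      · exact (hfresh i₀ hi₀ i hσi₀).2.2 j hvar hi
    rw [Lvl.subst_subst]
    exact (Lvl.subst_equiv_subst _ fun i hi => hτ₂ i (hθj i hi)).trans (hθτ₁ j hj)
  · obtain ⟨m, hθm, hσm⟩ := Lvl.subst_eq_var hθj
    by_cases hm : m ∈ e.1.fv ∪ e.2.fv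
    · have hjm : j ∈ (σ m).fv := by rw [hσm]; exact Finset.mem_singleton_self j
      obtain ⟨hj_fresh, hθj_var, -⟩ := hfresh m hm j hjm
      obtain rfl : m = j := Lvl.var.inj (hθm.symm.trans hθj_var)
      exact absurd hm (hj_fresh e (Finset.mem_insert_self e C))
    · obtain rfl : m = j := Lvl.var.inj ((hdom m hm).symm.trans hσm)
      obtain ⟨e', he', hje'⟩ := inv.occurs_of_eq_var m hj hθm
      rcases Finset.mem_insert.mp he' with rfl | he'
      · exact absurd hje' hm
      · exact Occurs.image_subst ⟨e', he', hje'⟩ (hdom m hm)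

end Invariant

def ConfigInvariant (C₀ : Finset Eqn) : Config → Prop
  | .bot => ¬ ∃ τ, SolvesP τ C₀
  | .ok C θ => Invariant C₀ C θ

theorem ConfigInvariant.step {C₀ : Finset Eqn} {c c' : Config} (h : Step c c')
    (hc : ConfigInvariant C₀ c) : ConfigInvariant C₀ c' := by
  cases h with
  | solve e C θ σ _ hσ hdom hfresh => exact Invariant.solve hc hσ hdom hfresh
  | fail e C θ he hne => exact Invariant.not_solvesP hc he hne

theorem ConfigInvariant.reflTransGen {C₀ : Finset Eqn} {c c' : Config}
    (h : Relation.ReflTransGen Step c c') (hc : ConfigInvariant C₀ c) :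
    ConfigInvariant C₀ c' := by
  induction h with
  | refl => exact hc
  | tail _ hstep ih => exact ih.step hstep

/-- Correctness of the constraint-postponement unification algorithm: starting
from `(C; ∅)`, if the algorithm reaches `(∅; θ)` then `θ` is a most general
unifier of `C`, and if it reaches `⊥` then `C` has no unifier. -/
theorem unification_correct (C : Finset Eqn) :
    (∀ θ : ℕ → Lvl,
      Relation.ReflTransGen Step (.ok C (fun i => Lvl.var i)) (.ok ∅ θ) →
      IsMGUP θ C) ∧
    (Relation.ReflTransGen Step (.ok C (fun i => Lvl.var i)) .bot →
      ¬ ∃ τ, SolvesP τ C) :=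
  ⟨fun _ h => Invariant.isMGUP (ConfigInvariant.reflTransGen h (Invariant.init C)),
    fun h => ConfigInvariant.reflTransGen h (Invariant.init C)⟩
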